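/- Let Ω be a domain in ℂ^n containing the origin 0 and let φ be a plurisubharmonic function on Ω with ν_φ(0) > 0. Let s > t > -n be real numbers such that a := c_t(φ) < c_s(φ). Then for every γ with a < γ < c_s(φ), the plurisubharmonic function φ_γ := max{φ, ((s-t)/(γ-a))·log‖z‖} satisfies c_t(φ_γ) = a. -/

import Mathlib

open MeasureTheory Filter Metric Topology Complex
open scoped ENNReal EReal

noncomputable section

/-- `ℂ^n` with its Euclidean (Hermitian) norm. -/
abbrev Cn (n : ℕ) : Type := EuclideanSpace ℂ (Fin n)

/-- Lebesgue measure on `ℂ^n ≅ ℝ^{2n}`. -/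
instance Cn.measureSpace (n : ℕ) : MeasureSpace (Cn n) where
  toMeasurableSpace := inferInstance
  volume := Measure.map (MeasurableEquiv.toLp 2 (Fin n → ℂ)) volume

/-- Extended-real-valued logarithm, sending `0` (and negative numbers) to `-∞`. -/
def elog (x : ℝ) : EReal := if x ≤ 0 then (⊥ : EReal) else ((Real.log x : ℝ) : EReal)

/-- `exp : EReal → ℝ≥0∞`, with `exp (-∞) = 0` and `exp (+∞) = +∞`. -/
def erealExp (x : EReal) : ℝ≥0∞ :=
  if x = ⊤ then ⊤ else if x = ⊥ then 0 else ENNReal.ofReal (Real.exp x.toReal)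

/-- The positive part of an extended real number, as an element of `ℝ≥0∞`. -/
def erealPosPart (x : EReal) : ℝ≥0∞ := if x = ⊤ then ⊤ else ENNReal.ofReal x.toReal

/-- The integral of an `EReal`-valued function: upper integral of the positive part minus the
upper integral of the negative part. -/
def erealIntegral {α : Type*} [MeasurableSpace α] (μ : Measure α) (f : α → EReal) : EReal :=
  ((∫⁻ a, erealPosPart (f a) ∂μ : ℝ≥0∞) : EReal) -
    ((∫⁻ a, erealPosPart (-(f a)) ∂μ : ℝ≥0∞) : EReal)

/-- A function `f : ℂ → [-∞, ∞)` is subharmonic on an open set `U ⊆ ℂ` if it is upper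
semicontinuous on `U` and satisfies the sub-mean value inequality on circles contained in `U`
(written in the form `2π · f(z) ≤ ∫_0^{2π} f(z + r e^{iθ}) dθ`). -/
def SubhOn (f : ℂ → EReal) (U : Set ℂ) : Prop :=
  UpperSemicontinuousOn f U ∧
  ∀ z ∈ U, ∀ r : ℝ, 0 < r → closedBall z r ⊆ U →
    ((2 * Real.pi : ℝ) : EReal) * f z ≤
      erealIntegral (volume.restrict (Set.Ioc (0:ℝ) (2 * Real.pi)))
        (fun θ : ℝ => f (z + (r : ℂ) * Complex.exp (θ * Complex.I)))

/-- A function `φ : ℂ^n → [-∞, ∞)` is plurisubharmonic on `Ω` if it is upper semicontinuous on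
`Ω`, not identically `-∞`, never `+∞`, and its restriction to every complex line is subharmonic. -/
def PshOn {n : ℕ} (φ : Cn n → EReal) (Ω : Set (Cn n)) : Prop :=
  UpperSemicontinuousOn φ Ω ∧ (∃ z ∈ Ω, φ z ≠ ⊥) ∧ (∀ z ∈ Ω, φ z ≠ ⊤) ∧
  ∀ a v : Cn n, SubhOn (fun w : ℂ => φ (a + w • v)) {w : ℂ | a + w • v ∈ Ω}

/-- A domain in `ℂ^n`: a nonempty connected open set. -/
def IsCnDomain {n : ℕ} (Ω : Set (Cn n)) : Prop := IsOpen Ω ∧ IsConnected Ω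

/-- The Lelong number of `φ` at the origin: `ν_φ(0) = liminf_{z → 0} φ(z) / log ‖z‖`. -/
def lelong {n : ℕ} (φ : Cn n → EReal) : EReal :=
  liminf (fun z : Cn n => φ z * (((Real.log ‖z‖)⁻¹ : ℝ) : EReal)) (𝓝[≠] (0 : Cn n))

/-- The Lelong number at `0` of the restriction of `φ` to the complex line through `0` with
direction `v`: `ν_{φ|_l}(0) = liminf_{λ → 0} φ(λ v) / log |λ|`. -/
def lelongLine {n : ℕ} (φ : Cn n → EReal) (v : Cn n) : EReal :=
  liminf (fun w : ℂ => φ (w • v) * (((Real.log ‖w‖)⁻¹ : ℝ) : EReal)) (𝓝[≠] (0 : ℂ))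

/-- `‖z‖^{2t} e^{-2cφ}` is (Lebesgue) integrable on some neighborhood of the origin. -/
def lctIntegrable {n : ℕ} (t c : ℝ) (φ : Cn n → EReal) : Prop :=
  ∃ U ∈ 𝓝 (0 : Cn n),
    (∫⁻ z in U, ENNReal.ofReal (‖z‖ ^ (2 * t)) *
        erealExp (((-(2 * c) : ℝ) : EReal) * φ z) ∂volume) < ⊤

/-- The weighted log canonical threshold
`c_t(φ) = sup {c ≥ 0 : ‖z‖^{2t} e^{-2cφ}` is integrable near `0}`, as an element of `[0, ∞]`. -/
def lct {n : ℕ} (t : ℝ) (φ : Cn n → EReal) : ℝ≥0∞ :=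
  ⨆ c ∈ {c : ℝ | 0 ≤ c ∧ lctIntegrable t c φ}, ENNReal.ofReal c

/-! Only `c_t(φ_γ) ≤ a` needs an argument, since `φ ≤ φ_γ`. Suppose `‖z‖^{2t} e^{-2cφ_γ}` is
integrable near `0` for some `c > a`, and pick `c' > γ` with `‖z‖^{2s} e^{-2c'φ}` integrable near
`0`. Near `0`, `φ` is bounded above by some `K` (upper semicontinuity), so lowering an exponent from
`v` to `u ≤ v` costs at most the factor `e^{2(v-u)K}`. Where `φ_γ = φ` this bounds
`‖z‖^{2t} e^{-2c₁φ}` by the first integrand for every `c₁ ≤ c`. Where `φ < M log‖z‖`, with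
`M = (s-t)/(γ-a)`, we have `‖z‖^{2(t-s)} ≤ e^{-2(γ-a)φ}`, which bounds it by the second integrand
whenever `c₁ + γ - a ≤ c'`. Hence `c₁ = min(c, a + c' - γ) > a` would satisfy `c₁ ≤ c_t(φ) = a`.
-/

lemma erealExp_coe (r : ℝ) : erealExp r = ENNReal.ofReal (Real.exp r) := by
  simp [erealExp]

lemma erealExp_top : erealExp ⊤ = ⊤ := by
  simp [erealExp]

lemma monotone_erealExp : Monotone erealExp := by
  intro x y h
  induction x using EReal.rec with
  | bot => simp [erealExp]
  | top => rw [top_le_iff.mp h]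
  | coe r =>
    induction y using EReal.rec with
    | bot => exact absurd h (by simp)
    | top => simp [erealExp_top]
    | coe q =>
      rw [erealExp_coe, erealExp_coe]
      exact ENNReal.ofReal_le_ofReal (Real.exp_le_exp.mpr (by exact_mod_cast h))

lemma antitone_erealExp_coe_mul {r : ℝ} (hr : r ≤ 0) :
    Antitone fun x : EReal => erealExp (r * x) :=
  monotone_erealExp.comp_antitone fun x y h => by
    simpa only [mul_comm (r : EReal)] using
      EReal.mul_le_mul_of_nonpos_right h (by exact_mod_cast hr)

lemma erealExp_neg_mul_le {u v K : ℝ} (hu : 0 < u) (huv : u ≤ v) {x : EReal} (hx : x ≤ K) :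
    erealExp ((-(2 * u) : ℝ) * x) ≤
      ENNReal.ofReal (Real.exp (2 * (v - u) * K)) * erealExp ((-(2 * v) : ℝ) * x) := by
  induction x using EReal.rec with
  | bot =>
    rw [EReal.coe_mul_bot_of_neg (by linarith : (-(2 * v) : ℝ) < 0), erealExp_top,
      ENNReal.mul_top (ENNReal.ofReal_pos.mpr (Real.exp_pos _)).ne']
    exact le_top
  | top => exact absurd hx (EReal.coe_lt_top K).not_ge
  | coe r =>
    have hr : r ≤ K := by exact_mod_cast hx
    rw [← EReal.coe_mul, ← EReal.coe_mul, erealExp_coe, erealExp_coe,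
      ← ENNReal.ofReal_mul (Real.exp_nonneg _), ← Real.exp_add]
    refine ENNReal.ofReal_le_ofReal (Real.exp_le_exp.mpr ?_)
    nlinarith [mul_le_mul_of_nonneg_left hr (by linarith : (0:ℝ) ≤ v - u)]

lemma ofReal_rpow_mul_erealExp_le_of_lt_mul_elog {ρ t s δ u : ℝ} (hts : t < s) (hδ : 0 < δ)
    (hu : 0 ≤ u) {x : EReal} (hx : x < ((s - t) / δ : ℝ) * elog ρ) :
    ENNReal.ofReal (ρ ^ (2 * t)) * erealExp ((-(2 * u) : ℝ) * x) ≤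
      ENNReal.ofReal (ρ ^ (2 * s)) * erealExp ((-(2 * (u + δ)) : ℝ) * x) := by
  have hM : 0 < (s - t) / δ := div_pos (sub_pos.2 hts) hδ
  have hρ : 0 < ρ := by
    by_contra! h
    simp [elog, h, EReal.coe_mul_bot_of_pos hM] at hx
  rw [elog, if_neg hρ.not_ge, ← EReal.coe_mul] at hx
  induction x using EReal.rec with
  | bot =>
    rw [EReal.coe_mul_bot_of_neg (by linarith : (-(2 * (u + δ)) : ℝ) < 0), erealExp_top,
      ENNReal.mul_top (ENNReal.ofReal_pos.mpr (Real.rpow_pos_of_pos hρ _)).ne']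
    exact le_top
  | top => exact absurd hx not_top_lt
  | coe r =>
    have hr : δ * r < (s - t) * Real.log ρ := by
      have hrM := EReal.coe_lt_coe_iff.1 hx
      rw [div_mul_eq_mul_div, lt_div_iff₀ hδ] at hrM
      linarith
    rw [← EReal.coe_mul, ← EReal.coe_mul, erealExp_coe, erealExp_coe,
      ← ENNReal.ofReal_mul (Real.rpow_nonneg hρ.le _),
      ← ENNReal.ofReal_mul (Real.rpow_nonneg hρ.le _), Real.rpow_def_of_pos hρ,
      Real.rpow_def_of_pos hρ, ← Real.exp_add, ← Real.exp_add]
    exact ENNReal.ofReal_le_ofReal (Real.exp_le_exp.2 (by nlinarith))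

lemma ofReal_rpow_mul_erealExp_le_add {ρ t s δ c₁ c c' K : ℝ} (hts : t < s) (hδ : 0 < δ)
    (hc₁ : 0 < c₁) (hc₁c : c₁ ≤ c) (hc' : c₁ + δ ≤ c') {x : EReal} (hx : x ≤ K) :
    ENNReal.ofReal (ρ ^ (2 * t)) * erealExp ((-(2 * c₁) : ℝ) * x) ≤
      ENNReal.ofReal (Real.exp (2 * (c - c₁) * K)) * (ENNReal.ofReal (ρ ^ (2 * t)) *
          erealExp ((-(2 * c) : ℝ) * max x (((s - t) / δ : ℝ) * elog ρ))) +
        ENNReal.ofReal (Real.exp (2 * (c' - (c₁ + δ)) * K)) *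
          (ENNReal.ofReal (ρ ^ (2 * s)) * erealExp ((-(2 * c') : ℝ) * x)) := by
  rcases le_or_gt (((s - t) / δ : ℝ) * elog ρ) x with hle | hlt
  · rw [max_eq_left hle, mul_left_comm]
    refine le_add_right ?_
    gcongr
    exact erealExp_neg_mul_le hc₁ hc₁c hx
  · refine le_add_left ?_
    calc _ ≤ ENNReal.ofReal (ρ ^ (2 * s)) * erealExp ((-(2 * (c₁ + δ)) : ℝ) * x) :=
          ofReal_rpow_mul_erealExp_le_of_lt_mul_elog hts hδ hc₁.le hlt
      _ ≤ ENNReal.ofReal (ρ ^ (2 * s)) * (ENNReal.ofReal (Real.exp (2 * (c' - (c₁ + δ)) * K)) *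
            erealExp ((-(2 * c') : ℝ) * x)) := by
          gcongr
          exact erealExp_neg_mul_le (by linarith) hc' hx
      _ = _ := mul_left_comm _ _ _

lemma UpperSemicontinuousOn.aemeasurable_restrict {α β : Type*} [TopologicalSpace α]
    [MeasurableSpace α] [OpensMeasurableSpace α] [LinearOrder β] [TopologicalSpace β]
    [OrderTopology β] [SecondCountableTopology β] [MeasurableSpace β] [BorelSpace β]
    {f : α → β} {s : Set α} {μ : Measure α} (hf : UpperSemicontinuousOn f s)
    (hs : MeasurableSet s) : AEMeasurable f (μ.restrict s) :=
  aemeasurable_restrict_of_measurable_subtype hs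
    (upperSemicontinuousOn_iff_restrict.2 hf).measurable

lemma UpperSemicontinuousOn.upperSemicontinuousAt {α β : Type*} [TopologicalSpace α]
    [Preorder β] {f : α → β} {s : Set α} {x : α} (hf : UpperSemicontinuousOn f s)
    (hs : s ∈ 𝓝 x) : UpperSemicontinuousAt f x := fun y hy => by
  simpa only [nhdsWithin_eq_nhds.2 hs] using hf x (mem_of_mem_nhds hs) y hy

lemma UpperSemicontinuousAt.exists_eventually_le_coe {α : Type*} [TopologicalSpace α]
    {f : α → EReal} {x : α} (hf : UpperSemicontinuousAt f x) (hx : f x ≠ ⊤) :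
    ∃ K : ℝ, ∀ᶠ z in 𝓝 x, f z ≤ K := by
  obtain ⟨q, hq, -⟩ := EReal.exists_rat_btwn_of_lt hx.lt_top
  exact ⟨q, (hf _ hq).mono fun _ h => h.le⟩

section LogCanonicalThreshold

variable {n : ℕ} {t c : ℝ} {φ : Cn n → EReal}

def lctDensity (t c : ℝ) (φ : Cn n → EReal) (z : Cn n) : ℝ≥0∞ :=
  ENNReal.ofReal (‖z‖ ^ (2 * t)) * erealExp (((-(2 * c) : ℝ) : EReal) * φ z)

lemma le_lct (hc : 0 ≤ c) (h : lctIntegrable t c φ) : ENNReal.ofReal c ≤ lct t φ :=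
  le_iSup₂ (f := fun c (_ : c ∈ {c : ℝ | 0 ≤ c ∧ lctIntegrable t c φ}) => ENNReal.ofReal c)
    c ⟨hc, h⟩

lemma lct_le {x : ℝ≥0∞} (h : ∀ c, 0 ≤ c → lctIntegrable t c φ → ENNReal.ofReal c ≤ x) :
    lct t φ ≤ x :=
  iSup₂_le fun c hc => h c hc.1 hc.2

lemma exists_lctIntegrable_of_lt_lct {x : ℝ≥0∞} (h : x < lct t φ) :
    ∃ c, 0 ≤ c ∧ lctIntegrable t c φ ∧ x < ENNReal.ofReal c := by
  obtain ⟨c, hc, hxc⟩ := lt_biSup_iff.1 h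
  exact ⟨c, hc.1, hc.2, hxc⟩

lemma lctIntegrable.mono {ψ : Cn n → EReal} (h : lctIntegrable t c φ) (hc : 0 ≤ c)
    (hφψ : φ ≤ ψ) : lctIntegrable t c ψ := by
  obtain ⟨U, hU, hI⟩ := h
  refine ⟨U, hU, lt_of_le_of_lt (lintegral_mono fun z => ?_) hI⟩
  gcongr
  exact antitone_erealExp_coe_mul (by linarith) (hφψ z)

lemma lct_mono {ψ : Cn n → EReal} (hφψ : φ ≤ ψ) : lct t φ ≤ lct t ψ :=
  lct_le fun _ hc h => le_lct hc (h.mono hc hφψ)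

lemma lctIntegrable_of_lctIntegrable_max {Ω : Set (Cn n)} {s δ c₁ c' K : ℝ}
    (hΩ : Ω ∈ 𝓝 0) (hmeas : AEMeasurable φ (volume.restrict Ω)) (hK : ∀ᶠ z in 𝓝 0, φ z ≤ K)
    (hts : t < s) (hδ : 0 < δ) (hc₁ : 0 < c₁) (hc₁c : c₁ ≤ c) (hc' : c₁ + δ ≤ c')
    (hmax : lctIntegrable t c fun z => max (φ z) (((s - t) / δ : ℝ) * elog ‖z‖))
    (hs : lctIntegrable s c' φ) : lctIntegrable t c₁ φ := by
  obtain ⟨U₁, hU₁, hI₁⟩ := hmax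
  obtain ⟨U₂, hU₂, hI₂⟩ := hs
  set B := interior (Ω ∩ {z | φ z ≤ K} ∩ U₁ ∩ U₂)
  have hBsub : B ⊆ Ω ∩ {z | φ z ≤ K} ∩ U₁ ∩ U₂ := interior_subset
  have hB : B ∈ 𝓝 0 :=
    interior_mem_nhds.2 (inter_mem (inter_mem (inter_mem hΩ hK) hU₁) hU₂)
  set C₁ := ENNReal.ofReal (Real.exp (2 * (c - c₁) * K))
  set C₂ := ENNReal.ofReal (Real.exp (2 * (c' - (c₁ + δ)) * K))
  have hmeasB : AEMeasurable (fun z => C₂ * lctDensity s c' φ z) (volume.restrict B) := by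
    have hφB := hmeas.mono_measure (Measure.restrict_mono (fun z hz => (hBsub hz).1.1.1) le_rfl)
    have hρ : Measurable fun z : Cn n => ENNReal.ofReal (‖z‖ ^ (2 * s)) :=
      ENNReal.measurable_ofReal.comp (continuous_norm.measurable.pow_const _)
    exact (hρ.aemeasurable.mul
      (monotone_erealExp.measurable.comp_aemeasurable (hφB.const_mul _))).const_mul C₂
  refine ⟨B, hB, ?_⟩
  calc ∫⁻ z in B, lctDensity t c₁ φ z
      ≤ ∫⁻ z in B, (C₁ * lctDensity t c (fun z => max (φ z) (((s - t) / δ : ℝ) * elog ‖z‖)) z +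
          C₂ * lctDensity s c' φ z) :=
        setLIntegral_mono' isOpen_interior.measurableSet fun z hz =>
          ofReal_rpow_mul_erealExp_le_add hts hδ hc₁ hc₁c hc' (hBsub hz).1.1.2
    _ = C₁ * (∫⁻ z in B, lctDensity t c (fun z => max (φ z) (((s - t) / δ : ℝ) * elog ‖z‖)) z) +
          C₂ * ∫⁻ z in B, lctDensity s c' φ z := by
        rw [lintegral_add_right' _ hmeasB, lintegral_const_mul' _ _ ENNReal.ofReal_ne_top,
          lintegral_const_mul' _ _ ENNReal.ofReal_ne_top]
    _ < ⊤ := ENNReal.add_lt_top.2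
        ⟨ENNReal.mul_lt_top ENNReal.ofReal_lt_top
            ((lintegral_mono_set fun z hz => (hBsub hz).1.2).trans_lt hI₁),
          ENNReal.mul_lt_top ENNReal.ofReal_lt_top
            ((lintegral_mono_set fun z hz => (hBsub hz).2).trans_lt hI₂)⟩

end LogCanonicalThreshold

theorem statement8_general {n : ℕ} (Ω : Set (Cn n)) (hΩ : IsCnDomain Ω)
    (h0 : (0 : Cn n) ∈ Ω) (φ : Cn n → EReal) (hφ : PshOn φ Ω)
    (s t : ℝ) (hst : t < s)
    (γ : ℝ) (hγ1 : lct t φ < ENNReal.ofReal γ) (hγ2 : ENNReal.ofReal γ < lct s φ) :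
    lct t (fun z : Cn n =>
        max (φ z) ((((s - t) / (γ - (lct t φ).toReal) : ℝ) : EReal) * elog ‖z‖))
      = lct t φ := by
  have hfin : lct t φ ≠ ⊤ := ne_top_of_lt hγ1
  set a := (lct t φ).toReal
  have haγ : a < γ := (ENNReal.lt_ofReal_iff_toReal_lt hfin).1 hγ1
  refine le_antisymm (lct_le fun c _ hc => ?_) (lct_mono fun z => le_max_left _ _)
  by_contra! hac
  rw [ENNReal.lt_ofReal_iff_toReal_lt hfin] at hac
  obtain ⟨c', -, hc', hγc'⟩ := exists_lctIntegrable_of_lt_lct hγ2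
  have hγc' : γ < c' := (ENNReal.ofReal_lt_ofReal_iff'.1 hγc').1
  have hΩ0 : Ω ∈ 𝓝 0 := hΩ.1.mem_nhds h0
  obtain ⟨K, hK⟩ :=
    (hφ.1.upperSemicontinuousAt hΩ0).exists_eventually_le_coe (hφ.2.2.1 0 h0)
  set c₁ := min c (a + (c' - γ))
  have hac₁ : a < c₁ := lt_min hac (by linarith)
  have hc₁ : lctIntegrable t c₁ φ :=
    lctIntegrable_of_lctIntegrable_max hΩ0 (hφ.1.aemeasurable_restrict hΩ.1.measurableSet) hK hst
      (sub_pos.2 haγ) (ENNReal.toReal_nonneg.trans_lt hac₁) (min_le_left _ _)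
      (by linarith [min_le_right c (a + (c' - γ))]) hc hc'
  exact (le_lct (ENNReal.toReal_nonneg.trans hac₁.le) hc₁).not_gt
    ((ENNReal.lt_ofReal_iff_toReal_lt hfin).2 hac₁)

/-- Let `ν_φ(0) > 0`, `s > t > -n` with `a := c_t(φ) < c_s(φ)`. Then for every
`γ` with `a < γ < c_s(φ)`, the function `φ_γ := max{φ, ((s-t)/(γ-a))·log‖z‖}` satisfies
`c_t(φ_γ) = a`. -/
theorem statement8 {n : ℕ} (hn : 0 < n) (Ω : Set (Cn n)) (hΩ : IsCnDomain Ω)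
    (h0 : (0 : Cn n) ∈ Ω) (φ : Cn n → EReal) (hφ : PshOn φ Ω) (hν : 0 < lelong φ)
    (s t : ℝ) (hst : t < s) (ht : -(n : ℝ) < t) (hlt : lct t φ < lct s φ)
    (γ : ℝ) (hγ1 : lct t φ < ENNReal.ofReal γ) (hγ2 : ENNReal.ofReal γ < lct s φ) :
    lct t (fun z : Cn n =>
        max (φ z) ((((s - t) / (γ - (lct t φ).toReal) : ℝ) : EReal) * elog ‖z‖))
      = lct t φ :=
  statement8_general Ω hΩ h0 φ hφ s t hst γ hγ1 hγ2
end
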